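/- Let m, n ≥ 0, let λ ∈ Λ_{n+1} with λ ⊂ m^{n+1}, and let μ ∈ Λ_n with μ ⊂ m^n. Then (n^m − μ′) ∼_m ((n+1)^m − λ′) holds in Λ_m if and only if μ ⪯ λ (with μ regarded as an element of Λ_{n+1}). -/

import Mathlib

open Finset

/-- `l` is a partition with at most `N` parts: `l 1 ≥ l 2 ≥ ⋯ ≥ l N (≥ 0)`. -/
def IsPartition {N : ℕ} (l : Fin N → ℕ) : Prop :=
  ∀ i j : Fin N, i ≤ j → l j ≤ l i

/-- Containment of diagrams: `μ ⊂ l`. -/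
def SubDiag {N : ℕ} (μ l : Fin N → ℕ) : Prop := ∀ j, μ j ≤ l j

/-- The weight `|l| = l 1 + ⋯ + l N`. -/
def wt {N : ℕ} (l : Fin N → ℕ) : ℕ := ∑ j, l j

/-- The skew diagram `l/μ` is a vertical strip: `μ j ≤ l j ≤ μ j + 1` for all `j`. -/
def VStrip {N : ℕ} (l μ : Fin N → ℕ) : Prop :=
  ∀ j, μ j ≤ l j ∧ l j ≤ μ j + 1

/-- The skew diagram `l/μ` is a horizontal strip:
`l 1 ≥ μ 1 ≥ l 2 ≥ μ 2 ≥ ⋯ ≥ l N ≥ μ N` (interlacing). -/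
def HStrip {N : ℕ} (l μ : Fin N → ℕ) : Prop :=
  (∀ j, μ j ≤ l j) ∧ ∀ (j : ℕ) (h : j + 1 < N), l ⟨j + 1, h⟩ ≤ μ ⟨j, by omega⟩

/-- `|l/μ| = |l| - |μ|` (for `μ ⊂ l`). -/
def skewWt {N : ℕ} (l μ : Fin N → ℕ) : ℕ := ∑ j, (l j - μ j)

/-- The proximity relation `μ ∼_r l`: there is a partition `ν ⊂ l, ν ⊂ μ` such that
`l/ν` and `μ/ν` are vertical strips with `|l/ν| + |μ/ν| ≤ r`. -/
def simRel {N : ℕ} (r : ℕ) (μ l : Fin N → ℕ) : Prop :=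
  ∃ ν : Fin N → ℕ, IsPartition ν ∧ SubDiag ν l ∧ SubDiag ν μ ∧
    VStrip l ν ∧ VStrip μ ν ∧ skewWt l ν + skewWt μ ν ≤ r

/-- `μ ⪯ l`: there is a partition `ν` with `μ ⊂ ν ⊂ l` such that `l/ν` and `ν/μ`
are horizontal strips. -/
def preceq {N : ℕ} (μ l : Fin N → ℕ) : Prop :=
  ∃ ν : Fin N → ℕ, IsPartition ν ∧ SubDiag μ ν ∧ SubDiag ν l ∧
    HStrip l ν ∧ HStrip ν μ

/-- The conjugate partition `l′ ∈ Λ_m` (for `l ∈ Λ_N` with `l 1 ≤ m`):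
`l′ i = #{j : l j ≥ i}` (here `i : Fin m` is 0-based, so `i+1`-th row). -/
def conjP {N : ℕ} (m : ℕ) (l : Fin N → ℕ) : Fin m → ℕ :=
  fun i => (Finset.univ.filter (fun j : Fin N => (i : ℕ) + 1 ≤ l j)).card

/-- The rectangular partition `m^N ∈ Λ_N`. -/
def rectP (m N : ℕ) : Fin N → ℕ := fun _ => m

/-- The complement `m^N − l` of `l ⊂ m^N` in `Λ_N`: `(m^N − l) j = m − l (N+1−j)`
(1-based), i.e. `m - l j.rev` (0-based). -/
def complP {N : ℕ} (m : ℕ) (l : Fin N → ℕ) : Fin N → ℕ :=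
  fun j => m - l j.rev

/-- The natural embedding `Λ_N ↪ Λ_{N+1}` by appending a zero part. -/
def extendP {N : ℕ} (l : Fin N → ℕ) : Fin (N + 1) → ℕ := Fin.snoc l 0

/-! Everything is read off columnwise. Writing `a = n^m − μ′` and `b = (n+1)^m − λ′`, the relation
`a ∼_m b` holds iff corresponding parts of `a` and `b` differ by at most one (take `ν = min a b`),
that is, iff `μ′ ⊂ λ′` and `λ′ ≤ μ′ + 2` columnwise. On the row side, `μ ⪯ λ` holds iff `μ ⊂ λ`
and `λⱼ₊₂ ≤ μⱼ` (take `ν = max μ (λ with its first row removed)`), and under conjugation the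
shifted containment `λⱼ₊ₖ ≤ μⱼ` corresponds to `λ′ ≤ μ′ + k`. -/

lemma conjP_le_card {N : ℕ} (m : ℕ) (l : Fin N → ℕ) (c : Fin m) : conjP m l c ≤ N :=
  (card_filter_le _ _).trans (by simp)

lemma isPartition_conjP {N : ℕ} (m : ℕ) (l : Fin N → ℕ) : IsPartition (conjP m l) := by
  intro c c' hcc'
  refine card_le_card fun j hj => ?_
  simp only [mem_filter, mem_univ, true_and] at hj ⊢
  have : (c : ℕ) ≤ c' := hcc'
  omega

lemma lt_conjP_iff {N m : ℕ} {l : Fin N → ℕ} (hl : IsPartition l) (c : Fin m) (j : Fin N) :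
    (j : ℕ) < conjP m l c ↔ (c : ℕ) + 1 ≤ l j := by
  constructor
  · intro hj
    by_contra hlt
    have hsub : univ.filter (fun i : Fin N => (c : ℕ) + 1 ≤ l i) ⊆ Iio j := by
      intro i hi
      simp only [mem_filter, mem_univ, true_and] at hi
      rw [mem_Iio]
      by_contra hji
      exact hlt (hi.trans (hl j i (not_lt.mp hji)))
    have := card_le_card hsub
    rw [Fin.card_Iio] at this
    exact absurd hj (not_lt.mpr this)
  · intro hj
    have hsub : Iic j ⊆ univ.filter (fun i : Fin N => (c : ℕ) + 1 ≤ l i) := by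
      intro i hi
      simp only [mem_filter, mem_univ, true_and]
      exact hj.trans (hl i j (mem_Iic.mp hi))
    have := card_le_card hsub
    rw [Fin.card_Iic] at this
    exact Nat.lt_of_succ_le this

lemma conjP_le_conjP_add_iff {M N m : ℕ} {l : Fin M → ℕ} {μ : Fin N → ℕ}
    (hl : IsPartition l) (hlm : SubDiag l (rectP m M)) (hμ : IsPartition μ)
    (k : ℕ) (hMN : M ≤ N + k) :
    (∀ c : Fin m, conjP m l c ≤ conjP m μ c + k) ↔
      ∀ (j : ℕ) (hj : j + k < M), l ⟨j + k, hj⟩ ≤ μ ⟨j, by omega⟩ := by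
  constructor
  · intro h j hj
    by_cases hzero : l ⟨j + k, hj⟩ = 0
    · simp [hzero]
    have : l ⟨j + k, hj⟩ ≤ m := hlm _
    set c : Fin m := ⟨l ⟨j + k, hj⟩ - 1, by omega⟩
    have hl' := (lt_conjP_iff hl c ⟨j + k, hj⟩).mpr (by simp only [c]; omega)
    have hμ' := (lt_conjP_iff hμ c ⟨j, by omega⟩).mp (by have := h c; simp only at hl' ⊢; omega)
    simp only [c] at hμ'
    omega
  · intro h c
    set K := conjP m l c
    by_cases hK : K ≤ k
    · omega
    have : K ≤ M := conjP_le_card m l c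
    -- the last row of `l` reaching column `c` is row `K - 1`; compare with row `K - 1 - k` of `μ`
    have hlK := (lt_conjP_iff hl c ⟨K - 1, by omega⟩).mp (by simp only; omega)
    have hshift : l ⟨K - 1 - k + k, by omega⟩ ≤ μ ⟨K - 1 - k, by omega⟩ := h _ _
    have hrow : l ⟨K - 1 - k + k, by omega⟩ = l ⟨K - 1, by omega⟩ := by
      congr 2; omega
    have := (lt_conjP_iff hμ c ⟨K - 1 - k, by omega⟩).mpr (hlK.trans (hrow ▸ hshift))
    simp only at this
    omega

lemma isPartition_complP {N : ℕ} (m : ℕ) {l : Fin N → ℕ} (hl : IsPartition l) :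
    IsPartition (complP m l) :=
  fun _ _ hij => Nat.sub_le_sub_left (hl _ _ (Fin.rev_le_rev.mpr hij)) m

lemma simRel_iff {N : ℕ} {a b : Fin N → ℕ} (ha : IsPartition a) (hb : IsPartition b) :
    simRel N a b ↔ ∀ i, a i ≤ b i + 1 ∧ b i ≤ a i + 1 := by
  constructor
  · rintro ⟨ν, -, -, -, hbν, haν, -⟩ i
    have := hbν i
    have := haν i
    omega
  · intro h
    refine ⟨fun i => min (a i) (b i),
      fun i j hij => min_le_min (ha i j hij) (hb i j hij),
      fun i => min_le_right _ _, fun i => min_le_left _ _,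
      fun i => ⟨min_le_right _ _, by have := h i; dsimp only; omega⟩,
      fun i => ⟨min_le_left _ _, by have := h i; dsimp only; omega⟩, ?_⟩
    calc skewWt b (fun i => min (a i) (b i)) + skewWt a (fun i => min (a i) (b i))
        = ∑ i, ((b i - min (a i) (b i)) + (a i - min (a i) (b i))) :=
          (sum_add_distrib).symm
      _ ≤ ∑ _i : Fin N, 1 := sum_le_sum fun i _ => by have := h i; omega
      _ = N := by simp

def dropFirstP {N : ℕ} (l : Fin N → ℕ) : Fin N → ℕ :=
  fun j => if h : (j : ℕ) + 1 < N then l ⟨j + 1, h⟩ else 0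

lemma isPartition_dropFirstP {N : ℕ} {l : Fin N → ℕ} (hl : IsPartition l) :
    IsPartition (dropFirstP l) := by
  intro i j hij
  have : (i : ℕ) ≤ j := hij
  unfold dropFirstP
  split_ifs with hj hi
  · exact hl _ _ (Fin.mk_le_mk.mpr (by omega))
  · omega
  · exact Nat.zero_le _
  · exact le_rfl

lemma dropFirstP_le {N : ℕ} {l : Fin N → ℕ} (hl : IsPartition l) (j : Fin N) :
    dropFirstP l j ≤ l j := by
  unfold dropFirstP
  split_ifs
  · exact hl _ _ (Fin.mk_le_mk.mpr (by omega))
  · exact Nat.zero_le _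

lemma preceq_iff {N : ℕ} {μ l : Fin N → ℕ} (hμ : IsPartition μ) (hl : IsPartition l) :
    preceq μ l ↔ SubDiag μ l ∧ ∀ (j : ℕ) (hj : j + 2 < N), l ⟨j + 2, hj⟩ ≤ μ ⟨j, by omega⟩ := by
  constructor
  · rintro ⟨ν, -, hμν, hνl, ⟨-, hlν⟩, ⟨-, hνμ⟩⟩
    exact ⟨fun j => (hμν j).trans (hνl j), fun j hj => (hlν (j + 1) hj).trans (hνμ j (by omega))⟩
  · rintro ⟨hμl, hjump⟩
    have hνl : ∀ j, max (μ j) (dropFirstP l j) ≤ l j := fun j =>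
      max_le (hμl j) (dropFirstP_le hl j)
    refine ⟨fun j => max (μ j) (dropFirstP l j),
      fun i j hij => max_le_max (hμ i j hij) (isPartition_dropFirstP hl i j hij),
      fun j => le_max_left _ _, hνl, ⟨hνl, fun j hj => ?_⟩,
      ⟨fun j => le_max_left _ _, fun j hj => ?_⟩⟩
    · refine le_max_of_le_right ?_
      simp only [dropFirstP, dif_pos hj, le_refl]
    · refine max_le (hμ _ _ (Fin.mk_le_mk.mpr (by omega))) ?_
      unfold dropFirstP
      split_ifs with h2
      · exact hjump j h2
      · exact Nat.zero_le _

lemma extendP_apply {N : ℕ} (l : Fin N → ℕ) (j : Fin (N + 1)) :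
    extendP l j = if h : (j : ℕ) < N then l ⟨j, h⟩ else 0 := by
  simp [extendP, Fin.snoc, Fin.castLT]

lemma isPartition_extendP {N : ℕ} {l : Fin N → ℕ} (hl : IsPartition l) :
    IsPartition (extendP l) := by
  intro i j hij
  have : (i : ℕ) ≤ j := hij
  simp only [extendP_apply]
  split_ifs with hj hi
  · exact hl _ _ (Fin.mk_le_mk.mpr (by omega))
  · omega
  · exact Nat.zero_le _
  · exact le_rfl

lemma preceq_extendP_iff {n : ℕ} {μ : Fin n → ℕ} {l : Fin (n + 1) → ℕ}
    (hμ : IsPartition μ) (hl : IsPartition l) :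
    preceq (extendP μ) l ↔ (∀ (j : ℕ) (hj : j < n), μ ⟨j, hj⟩ ≤ l ⟨j, by omega⟩) ∧
      ∀ (j : ℕ) (hj : j + 2 < n + 1), l ⟨j + 2, hj⟩ ≤ μ ⟨j, by omega⟩ := by
  rw [preceq_iff (isPartition_extendP hμ) hl]
  simp only [SubDiag, extendP_apply]
  constructor
  · rintro ⟨hsub, hjump⟩
    refine ⟨fun j hj => ?_, fun j hj => ?_⟩
    · simpa [hj] using hsub ⟨j, by omega⟩
    · simpa [show j < n by omega] using hjump j hj
  · rintro ⟨hsub, hjump⟩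
    refine ⟨fun j => ?_, fun j hj => ?_⟩
    · split_ifs with hj
      · exact hsub j hj
      · exact Nat.zero_le _
    · simpa [show j < n by omega] using hjump j hj

/-- For `λ ∈ Λ_{n+1}` with `λ ⊂ m^{n+1}` and `μ ∈ Λ_n` with `μ ⊂ m^n`,
`(n^m − μ′) ∼_m ((n+1)^m − λ′)` in `Λ_m` iff `μ ⪯ λ` (in `Λ_{n+1}`). -/
theorem statement1 (m n : ℕ) (lam : Fin (n + 1) → ℕ) (hlam : IsPartition lam)
    (hlamb : SubDiag lam (rectP m (n + 1)))
    (mu : Fin n → ℕ) (hmu : IsPartition mu) (hmub : SubDiag mu (rectP m n)) :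
    simRel m (complP n (conjP m mu)) (complP (n + 1) (conjP m lam)) ↔
      preceq (extendP mu) lam := by
  have hcontain := conjP_le_conjP_add_iff hmu hmub hlam 0 (by omega)
  have hjump := conjP_le_conjP_add_iff hlam hlamb hmu 2 (by omega)
  simp only [add_zero] at hcontain
  rw [simRel_iff (isPartition_complP n (isPartition_conjP m mu))
      (isPartition_complP (n + 1) (isPartition_conjP m lam)),
    preceq_extendP_iff hmu hlam, ← hcontain, ← hjump, ← forall_and,
    Fin.rev_surjective.forall]
  refine forall_congr' fun c => ?_
  have := conjP_le_card m mu c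
  have := conjP_le_card m lam c
  simp only [complP, Fin.rev_rev]
  omega
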